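/- arXiv:1906.10319 — 2 statements merged into one kernel-verified Lean document; each statement's English description precedes it below -/
import Mathlib

section
/- Let f: L2(0,1) → ℝ∪{+∞} be symmetric, lower semicontinuous, proper, and convex. If (X,G) and (X′,G′) are pairs in L2(0,1)² with the same joint law and G ∈ ∂f(X), then G′ ∈ ∂f(X′). -/
open MeasureTheory ProbabilityTheory Filter
open scoped ENNReal NNReal

noncomputable section

/-- Lebesgue measure restricted to the interval `(0,1)`. -/
def unitMeasure : Measure ℝ := volume.restrict (Set.Ioo (0:ℝ) 1)

/-- The Hilbert space `L2(0,1)`. -/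
abbrev L2 : Type := Lp ℝ 2 unitMeasure

/-- The law (pushforward of Lebesgue measure on `(0,1)`) of `X ∈ L2(0,1)`. -/
def lawOf (X : L2) : Measure ℝ := Measure.map (fun t => X t) unitMeasure

/-- The joint law of a pair of elements of `L2(0,1)`. -/
def lawOf2 (X G : L2) : Measure (ℝ × ℝ) :=
  Measure.map (fun t => (X t, G t)) unitMeasure

/-- Membership in the Wasserstein space `P₂(ℝ)`. -/
def MemP2 (μ : Measure ℝ) : Prop :=
  IsProbabilityMeasure μ ∧ Integrable (fun x : ℝ => x ^ 2) μ

/-- Membership in the Wasserstein space `P₂(ℝ²)`. -/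
def MemP2Prod (π : Measure (ℝ × ℝ)) : Prop :=
  IsProbabilityMeasure π ∧ Integrable (fun q : ℝ × ℝ => q.1 ^ 2 + q.2 ^ 2) π

/-- `π` is a coupling of `μ` and `ν`. -/
def IsCoupling (π : Measure (ℝ × ℝ)) (μ ν : Measure ℝ) : Prop :=
  π.fst = μ ∧ π.snd = ν

/-- Squared Wasserstein-2 distance on `P₂(ℝ)`. -/
def W2sq (μ ν : Measure ℝ) : ℝ :=
  sInf {r : ℝ | ∃ π : Measure (ℝ × ℝ), IsCoupling π μ ν ∧ r = ∫ q, (q.1 - q.2) ^ 2 ∂π}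

/-- The Wasserstein-2 distance on `P₂(ℝ)`. -/
def W2 (μ ν : Measure ℝ) : ℝ := Real.sqrt (W2sq μ ν)

/-- Squared Wasserstein-2 distance on `P₂(ℝ²)` (Euclidean cost). -/
def W2sqProd (μ ν : Measure (ℝ × ℝ)) : ℝ :=
  sInf {r : ℝ | ∃ π : Measure ((ℝ × ℝ) × (ℝ × ℝ)), π.fst = μ ∧ π.snd = ν ∧
    r = ∫ q, ((q.1.1 - q.2.1) ^ 2 + (q.1.2 - q.2.2) ^ 2) ∂π}

/-- The Wasserstein-2 distance on `P₂(ℝ²)`. -/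
def W2Prod (μ ν : Measure (ℝ × ℝ)) : ℝ := Real.sqrt (W2sqProd μ ν)

/-- Convexity of an `ℝ ∪ {+∞}`-valued function. -/
def ConvexE {E : Type*} [AddCommMonoid E] [Module ℝ E] (f : E → EReal) : Prop :=
  ∀ x y : E, ∀ a b : ℝ, 0 ≤ a → 0 ≤ b → a + b = 1 →
    f (a • x + b • y) ≤ (a : EReal) * f x + (b : EReal) * f y

/-- Objective of the scalar proximal problem. -/
def obj1 (ρ : ℝ → EReal) (y x : ℝ) : EReal :=
  (((1:ℝ)/2 * (y - x) ^ 2 : ℝ) : EReal) + ρ x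

/-- `x` is the unique minimizer of `z ↦ ½(y−z)² + ρ(z)`. -/
def IsProx1 (ρ : ℝ → EReal) (y x : ℝ) : Prop :=
  (∀ z : ℝ, obj1 ρ y x ≤ obj1 ρ y z) ∧ ∀ z : ℝ, obj1 ρ y z ≤ obj1 ρ y x → z = x

/-- Objective of the proximal problem on `ℝ^p` (Euclidean norm). -/
def objPi {p : ℕ} (f : (Fin p → ℝ) → EReal) (y x : Fin p → ℝ) : EReal :=
  (((1:ℝ)/2 * ∑ i, (y i - x i) ^ 2 : ℝ) : EReal) + f x

/-- `x` is the unique minimizer of `z ↦ ½‖y−z‖² + f(z)` on `ℝ^p`. -/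
def IsProxPi {p : ℕ} (f : (Fin p → ℝ) → EReal) (y x : Fin p → ℝ) : Prop :=
  (∀ z, objPi f y x ≤ objPi f y z) ∧ ∀ z, objPi f y z ≤ objPi f y x → z = x

/-- Objective of the proximal problem on `L2(0,1)`. -/
def objL2 (f : L2 → EReal) (Y X : L2) : EReal :=
  (((1:ℝ)/2 * ∫ t, (Y t - X t) ^ 2 ∂unitMeasure : ℝ) : EReal) + f X

/-- `P` is the unique minimizer of `X ↦ ½E[(Y−X)²] + f(X)` on `L2(0,1)`. -/
def IsProxL2 (f : L2 → EReal) (Y P : L2) : Prop :=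
  (∀ X, objL2 f Y P ≤ objL2 f Y X) ∧ ∀ X, objL2 f Y X ≤ objL2 f Y P → X = P

/-- Permutation-symmetry of a function on `ℝ^p`. -/
def SymmPi {p : ℕ} (f : (Fin p → ℝ) → EReal) : Prop :=
  ∀ (σ : Equiv.Perm (Fin p)) (x : Fin p → ℝ), f (x ∘ σ) = f x

/-- Symmetry (law-invariance) of a function on `L2(0,1)`. -/
def SymmL2 (f : L2 → EReal) : Prop :=
  ∀ X X' : L2, lawOf X = lawOf X' → f X = f X'

/-- `G` belongs to the subdifferential of `f` at `X`. -/
def InSubdiff (f : L2 → EReal) (X G : L2) : Prop :=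
  ∀ X' : L2, f X + ((∫ t, G t * (X' t - X t) ∂unitMeasure : ℝ) : EReal) ≤ f X'

/-- Joint cyclic monotonicity of a set of measures on `ℝ²`. -/
def JointCycMono (K : Set (Measure (ℝ × ℝ))) : Prop :=
  ∀ (n : ℕ) (π : Fin n → Measure (ℝ × ℝ)), (∀ j, π j ∈ K) →
    ∀ X G : Fin n → L2, (∀ j, lawOf2 (X j) (G j) = π j) →
      ∀ σ : Equiv.Perm (Fin n),
        ∑ j, ∫ t, X j t * G (σ j) t ∂unitMeasure ≤
          ∑ j, ∫ t, X j t * G j t ∂unitMeasure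

/-- The standard Gaussian measure `N(0, I_p)` on `ℝ^p`. -/
def stdGaussPi (p : ℕ) : Measure (Fin p → ℝ) := Measure.pi fun _ => gaussianReal 0 1

/-- Convolution `μ * N(0, τ²)`. -/
def gaussConv (μ : Measure ℝ) (τ : ℝ) : Measure ℝ :=
  Measure.map (fun q : ℝ × ℝ => q.1 + q.2) (μ.prod (gaussianReal 0 (Real.toNNReal (τ ^ 2))))

/-- Empirical distribution of the coordinates of a vector in `ℝ^p`. -/
def empDist {p : ℕ} (θ : Fin p → ℝ) : Measure ℝ :=
  ((p : ℝ≥0∞))⁻¹ • ∑ j : Fin p, Measure.dirac (θ j)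

/-- Empirical joint distribution of the coordinate pairs of two vectors in `ℝ^p`. -/
def empPair {p : ℕ} (a b : Fin p → ℝ) : Measure (ℝ × ℝ) :=
  ((p : ℝ≥0∞))⁻¹ • ∑ j : Fin p, Measure.dirac (a j, b j)

/-- Non-decreasing and 1-Lipschitz (the class `PR₁`). -/
def IsPR1 (η : ℝ → ℝ) : Prop :=
  Monotone η ∧ ∀ y y' : ℝ, |η y - η y'| ≤ |y - y'|


/-!
Given `Y`, choose a measure-preserving map `S` of `(0,1)` with `|G - G' ∘ S| < ε`: on each level
set `{⌊G / ε⌋ = k}` it is the cumulative-volume map of that set followed by the generalized inverse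
of the cumulative-volume map of `{⌊G' / ε⌋ = k}`, and these two sets have equal measure because
`G` and `G'` have the same law. Then `Z = Y ∘ S` has the law of `Y`, so `f Z = f Y`, and
`⟪G, Z⟫ ≈ ⟪G' ∘ S, Y ∘ S⟫ = ⟪G', Y⟫`. Since `f X' = f X` and `⟪G', X'⟫ = ⟪G, X⟫` depend only on the
joint law, the subgradient inequality of `G` at `X` tested against `Z` becomes that of `G'` at `X'`
tested against `Y`, up to an error that tends to zero with `ε`.
-/

open Set
open scoped RealInnerProductSpace

section CumulativeVolume

variable {C D : Set ℝ}

def cumVol (C : Set ℝ) (t : ℝ) : ℝ := (volume (C ∩ Iic t)).toReal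

/-- The point `1` is inserted so that the infimum stays in `[0, 1]` for every `s`, which makes
`cumVolInv C` monotone. -/
def cumVolInv (C : Set ℝ) (s : ℝ) : ℝ := sInf (insert 1 {u ∈ Icc 0 1 | s ≤ cumVol C u})

lemma volume_ne_top_of_subset_Ioo (hC : C ⊆ Ioo 0 1) : volume C ≠ ⊤ :=
  measure_ne_top_of_subset hC (by simp [Real.volume_Ioo])

lemma cumVol_mono (hC : C ⊆ Ioo 0 1) : Monotone (cumVol C) := fun _ _ h =>
  ENNReal.toReal_mono (measure_ne_top_of_subset inter_subset_left (volume_ne_top_of_subset_Ioo hC))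
    (measure_mono (inter_subset_inter_right _ (Iic_subset_Iic.2 h)))

lemma cumVol_le (hC : C ⊆ Ioo 0 1) (t : ℝ) : cumVol C t ≤ (volume C).toReal :=
  ENNReal.toReal_mono (volume_ne_top_of_subset_Ioo hC) (measure_mono inter_subset_left)

lemma cumVol_one (hC : C ⊆ Ioo 0 1) : cumVol C 1 = (volume C).toReal := by
  rw [cumVol, inter_eq_self_of_subset_left fun x hx => mem_Iic.2 (hC hx).2.le]

lemma cumVol_of_nonpos (hC : C ⊆ Ioo 0 1) {t : ℝ} (ht : t ≤ 0) : cumVol C t = 0 := by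
  have : C ∩ Iic t = ∅ :=
    eq_empty_of_forall_notMem fun x hx => (hC hx.1).1.not_ge (le_trans hx.2 ht)
  simp [cumVol, this]

lemma cumVol_le_add_sub (hC : C ⊆ Ioo 0 1) {u t : ℝ} (hut : u ≤ t) :
    cumVol C t ≤ cumVol C u + (t - u) := by
  have hfin := measure_ne_top_of_subset (inter_subset_left (t := Iic u))
    (volume_ne_top_of_subset_Ioo hC)
  have h : volume (C ∩ Iic t) ≤ volume (C ∩ Iic u) + ENNReal.ofReal (t - u) :=
    calc volume (C ∩ Iic t) ≤ volume ((C ∩ Iic u) ∪ Ioc u t) :=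
          measure_mono fun x ⟨hx, hxt⟩ =>
            (le_or_gt x u).imp (fun h => ⟨hx, h⟩) (fun h => ⟨h, hxt⟩)
      _ ≤ volume (C ∩ Iic u) + volume (Ioc u t) := measure_union_le _ _
      _ = volume (C ∩ Iic u) + ENNReal.ofReal (t - u) := by rw [Real.volume_Ioc]
  have := ENNReal.toReal_mono (ENNReal.add_ne_top.2 ⟨hfin, ENNReal.ofReal_ne_top⟩) h
  rwa [ENNReal.toReal_add hfin ENNReal.ofReal_ne_top,
    ENNReal.toReal_ofReal (sub_nonneg.2 hut)] at this

lemma lipschitzWith_cumVol (hC : C ⊆ Ioo 0 1) : LipschitzWith 1 (cumVol C) := by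
  refine LipschitzWith.of_le_add fun x y => ?_
  rcases le_total x y with h | h
  · exact (cumVol_mono hC h).trans (le_add_of_nonneg_right dist_nonneg)
  · simpa [Real.dist_eq, abs_of_nonneg (sub_nonneg.2 h)] using cumVol_le_add_sub hC h

lemma continuous_cumVol (hC : C ⊆ Ioo 0 1) : Continuous (cumVol C) :=
  (lipschitzWith_cumVol hC).continuous

lemma zero_mem_lowerBounds_cumVolInv (C : Set ℝ) (s : ℝ) :
    0 ∈ lowerBounds (insert 1 {u ∈ Icc (0 : ℝ) 1 | s ≤ cumVol C u}) := by
  rintro u (rfl | ⟨hu, -⟩)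
  · exact zero_le_one
  · exact hu.1

lemma cumVolInv_mem (hC : C ⊆ Ioo 0 1) (s : ℝ) :
    cumVolInv C s ∈ insert 1 {u ∈ Icc (0 : ℝ) 1 | s ≤ cumVol C u} :=
  IsClosed.csInf_mem (isClosed_singleton.union
      (isClosed_Icc.inter (isClosed_le continuous_const (continuous_cumVol hC))))
    (insert_nonempty _ _) ⟨0, zero_mem_lowerBounds_cumVolInv C s⟩

lemma cumVolInv_nonneg (C : Set ℝ) (s : ℝ) : 0 ≤ cumVolInv C s :=
  le_csInf (insert_nonempty _ _) (zero_mem_lowerBounds_cumVolInv C s)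

lemma cumVolInv_le_one (C : Set ℝ) (s : ℝ) : cumVolInv C s ≤ 1 :=
  csInf_le ⟨0, zero_mem_lowerBounds_cumVolInv C s⟩ (mem_insert _ _)

lemma cumVolInv_mono (C : Set ℝ) : Monotone (cumVolInv C) := fun s _ hss' =>
  csInf_le_csInf ⟨0, zero_mem_lowerBounds_cumVolInv C s⟩ (insert_nonempty _ _)
    (insert_subset_insert fun _ ⟨hu, h⟩ => ⟨hu, hss'.trans h⟩)

lemma measurable_cumVolInv (C : Set ℝ) : Measurable (cumVolInv C) :=
  (cumVolInv_mono C).measurable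

lemma le_cumVol_cumVolInv (hC : C ⊆ Ioo 0 1) {s : ℝ} (hs : s ≤ (volume C).toReal) :
    s ≤ cumVol C (cumVolInv C s) := by
  rcases cumVolInv_mem hC s with h | ⟨-, h⟩
  · rwa [h, cumVol_one hC]
  · exact h

lemma cumVolInv_le_iff (hC : C ⊆ Ioo 0 1) {s t : ℝ} (hs : s ∈ Ioc 0 (volume C).toReal) :
    cumVolInv C s ≤ t ↔ s ≤ cumVol C t := by
  refine ⟨fun h => (le_cumVol_cumVolInv hC hs.2).trans (cumVol_mono hC h), fun h => ?_⟩
  rcases le_or_gt 1 t with h1 | h1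
  · exact (cumVolInv_le_one C s).trans h1
  have h0 : 0 ≤ t := by
    by_contra! ht
    rw [cumVol_of_nonpos hC ht.le] at h
    exact hs.1.not_ge h
  exact csInf_le ⟨0, zero_mem_lowerBounds_cumVolInv C s⟩ (mem_insert_of_mem _ ⟨⟨h0, h1.le⟩, h⟩)

lemma cumVol_cumVolInv (hC : C ⊆ Ioo 0 1) {s : ℝ} (hs : s ∈ Ioc 0 (volume C).toReal) :
    cumVol C (cumVolInv C s) = s := by
  obtain ⟨u, hu, hus⟩ := intermediate_value_Icc (cumVolInv_nonneg C s)
    (continuous_cumVol hC).continuousOn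
    ⟨(cumVol_of_nonpos hC le_rfl).trans_le hs.1.le, (cumVolInv_le_iff hC hs).1 le_rfl⟩
  rwa [← le_antisymm hu.2 ((cumVolInv_le_iff hC hs).2 hus.ge)]

lemma map_cumVolInv (hCm : MeasurableSet C) (hC : C ⊆ Ioo 0 1) :
    (volume.restrict (Ioc 0 (volume C).toReal)).map (cumVolInv C) = volume.restrict C := by
  have : IsFiniteMeasure (volume.restrict C) :=
    isFiniteMeasure_restrict.2 (volume_ne_top_of_subset_Ioo hC)
  refine Measure.ext_of_Iic _ _ fun t => ?_
  have hpre : cumVolInv C ⁻¹' Iic t ∩ Ioc 0 (volume C).toReal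
      = Iic (cumVol C t) ∩ Ioc 0 (volume C).toReal := by
    ext s
    exact and_congr_left (cumVolInv_le_iff hC)
  rw [Measure.map_apply (measurable_cumVolInv C) measurableSet_Iic,
    Measure.restrict_apply (measurable_cumVolInv C measurableSet_Iic), hpre,
    Iic_inter_Ioc_of_le (cumVol_le hC t), Real.volume_Ioc, sub_zero,
    Measure.restrict_apply' hCm, inter_comm, cumVol, ENNReal.ofReal_toReal
      (measure_ne_top_of_subset inter_subset_left (volume_ne_top_of_subset_Ioo hC))]

lemma map_cumVol (hCm : MeasurableSet C) (hC : C ⊆ Ioo 0 1) :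
    (volume.restrict C).map (cumVol C) = volume.restrict (Ioc 0 (volume C).toReal) := by
  rw [← map_cumVolInv hCm hC, Measure.map_map (continuous_cumVol hC).measurable
    (measurable_cumVolInv C)]
  conv_rhs => rw [← Measure.map_id (μ := volume.restrict (Ioc 0 (volume C).toReal))]
  exact Measure.map_congr
    (ae_restrict_of_forall_mem measurableSet_Ioc fun s hs => cumVol_cumVolInv hC hs)

lemma exists_measurable_map_restrict_eq (hCm : MeasurableSet C) (hC : C ⊆ Ioo 0 1)
    (hDm : MeasurableSet D) (hD : D ⊆ Ioo 0 1) (hCD : volume C = volume D) :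
    ∃ T : ℝ → ℝ, Measurable T ∧ (volume.restrict C).map T = volume.restrict D :=
  ⟨cumVolInv D ∘ cumVol C, (measurable_cumVolInv D).comp (continuous_cumVol hC).measurable, by
    rw [← Measure.map_map (measurable_cumVolInv D) (continuous_cumVol hC).measurable,
      map_cumVol hCm hC, hCD, map_cumVolInv hDm hD]⟩

end CumulativeVolume

section Gluing

variable {α β ι : Type*} [MeasurableSpace α] [MeasurableSpace β] [MeasurableSpace ι] [Countable ι]
  [MeasurableSingletonClass ι] {μ : Measure α} {ν : Measure β} {a : α → ι} {b : β → ι}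
  {T : ι → α → β}

lemma MeasureTheory.Measure.sum_restrict_preimage_singleton (ha : Measurable a) :
    Measure.sum (fun i => μ.restrict (a ⁻¹' {i})) = μ := by
  rw [← Measure.restrict_iUnion (fun i j hij => Disjoint.preimage a (disjoint_singleton.2 hij))
    (fun i => ha (measurableSet_singleton i)), ← preimage_iUnion, iUnion_of_singleton,
    preimage_univ, Measure.restrict_univ]

lemma measurable_glue (ha : Measurable a) (hT : ∀ i, Measurable (T i)) :
    Measurable fun x => T (a x) x :=
  (measurable_from_prod_countable_left (f := fun p : α × ι => T p.2 p.1) hT).comp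
    (measurable_id.prodMk ha)

lemma map_glue (ha : Measurable a) (hb : Measurable b) (hT : ∀ i, Measurable (T i))
    (hmap : ∀ i, (μ.restrict (a ⁻¹' {i})).map (T i) = ν.restrict (b ⁻¹' {i})) :
    μ.map (fun x => T (a x) x) = ν := by
  conv_lhs => rw [← Measure.sum_restrict_preimage_singleton (μ := μ) ha]
  conv_rhs => rw [← Measure.sum_restrict_preimage_singleton (μ := ν) hb]
  rw [Measure.map_sum ((measurable_glue ha hT).aemeasurable)]
  congr 1
  funext i
  rw [← hmap i]
  exact Measure.map_congr (ae_restrict_of_forall_mem (ha (measurableSet_singleton i))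
    fun x hx => congrArg (T · x) hx)

lemma ae_glue (ha : Measurable a) (hb : Measurable b) (hT : ∀ i, Measurable (T i))
    (hmap : ∀ i, (μ.restrict (a ⁻¹' {i})).map (T i) = ν.restrict (b ⁻¹' {i})) :
    ∀ᵐ x ∂μ, b (T (a x) x) = a x := by
  rw [← Measure.sum_restrict_preimage_singleton (μ := μ) ha, Measure.ae_sum_iff]
  intro i
  have hb_ae : ∀ᵐ y ∂(μ.restrict (a ⁻¹' {i})).map (T i), b y = i := by
    rw [hmap i]
    exact ae_restrict_mem (hb (measurableSet_singleton i))
  filter_upwards [ae_restrict_mem (ha (measurableSet_singleton i)),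
    ae_of_ae_map (hT i).aemeasurable hb_ae] with x hxa hxb
  rw [show a x = i from hxa]
  exact hxb

end Gluing

instance : IsProbabilityMeasure unitMeasure :=
  ⟨by simp [unitMeasure, Real.volume_Ioo]⟩

lemma exists_measurePreserving_abs_sub_lt {g g' : ℝ → ℝ} (hg : Measurable g)
    (hg' : Measurable g') (hlaw : unitMeasure.map g = unitMeasure.map g') {ε : ℝ} (hε : 0 < ε) :
    ∃ S : ℝ → ℝ, MeasurePreserving S unitMeasure unitMeasure ∧
      ∀ᵐ u ∂unitMeasure, |g u - g' (S u)| < ε := by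
  have hk : Measurable fun x : ℝ => ⌊x / ε⌋ := (measurable_id.div_const ε).floor
  have ha : Measurable fun u => ⌊g u / ε⌋ := hk.comp hg
  have hb : Measurable fun u => ⌊g' u / ε⌋ := hk.comp hg'
  have hvol : ∀ h : ℝ → ℝ, Measurable h → ∀ k : ℤ,
      volume ((fun u => ⌊h u / ε⌋) ⁻¹' {k} ∩ Ioo 0 1)
        = unitMeasure.map h ((fun x : ℝ => ⌊x / ε⌋) ⁻¹' {k}) := fun h hh k => by
    rw [Measure.map_apply hh (hk (measurableSet_singleton k)), unitMeasure,
      Measure.restrict_apply (hh (hk (measurableSet_singleton k)))]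
    rfl
  have hcell : ∀ k : ℤ, ∃ T : ℝ → ℝ, Measurable T ∧
      (unitMeasure.restrict ((fun u => ⌊g u / ε⌋) ⁻¹' {k})).map T
        = unitMeasure.restrict ((fun u => ⌊g' u / ε⌋) ⁻¹' {k}) := fun k => by
    rw [unitMeasure, Measure.restrict_restrict (ha (measurableSet_singleton k)),
      Measure.restrict_restrict (hb (measurableSet_singleton k))]
    exact exists_measurable_map_restrict_eq
      ((ha (measurableSet_singleton k)).inter measurableSet_Ioo) inter_subset_right
      ((hb (measurableSet_singleton k)).inter measurableSet_Ioo) inter_subset_right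
      (by rw [hvol g hg, hvol g' hg', hlaw])
  choose T hT hmap using hcell
  refine ⟨fun u => T ⌊g u / ε⌋ u, ⟨measurable_glue ha hT,
    map_glue ha hb hT hmap⟩, ?_⟩
  filter_upwards [ae_glue ha hb hT hmap] with u hu
  have := Int.abs_sub_lt_one_of_floor_eq_floor hu.symm
  rwa [← sub_div, abs_div, abs_of_pos hε, div_lt_one hε] at this

section LawInvariance

lemma map_fst_lawOf2 (X G : L2) : (lawOf2 X G).map Prod.fst = lawOf X := by
  rw [lawOf2, Measure.map_map measurable_fst
    ((Lp.stronglyMeasurable X).measurable.prodMk (Lp.stronglyMeasurable G).measurable)]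
  rfl

lemma map_snd_lawOf2 (X G : L2) : (lawOf2 X G).map Prod.snd = lawOf G := by
  rw [lawOf2, Measure.map_map measurable_snd
    ((Lp.stronglyMeasurable X).measurable.prodMk (Lp.stronglyMeasurable G).measurable)]
  rfl

lemma integral_lawOf2 (X G : L2) {φ : ℝ × ℝ → ℝ} (hφ : Measurable φ) :
    ∫ q, φ q ∂lawOf2 X G = ∫ t, φ (X t, G t) ∂unitMeasure :=
  integral_map ((Lp.stronglyMeasurable X).measurable.prodMk
    (Lp.stronglyMeasurable G).measurable).aemeasurable hφ.aestronglyMeasurable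

lemma inner_eq_integral_mul (G X : L2) : ⟪G, X⟫ = ∫ t, G t * X t ∂unitMeasure := by
  simp [L2.inner_def, mul_comm]

lemma inner_eq_of_lawOf2_eq {X G X' G' : L2} (h : lawOf2 X G = lawOf2 X' G') :
    ⟪G, X⟫ = ⟪G', X'⟫ := by
  have hφ : Measurable fun q : ℝ × ℝ => q.2 * q.1 := by fun_prop
  rw [inner_eq_integral_mul, inner_eq_integral_mul, ← integral_lawOf2 X G hφ,
    ← integral_lawOf2 X' G' hφ, h]

lemma integral_mul_sub_eq_inner (G X Y : L2) :
    ∫ t, G t * (Y t - X t) ∂unitMeasure = ⟪G, Y⟫ - ⟪G, X⟫ := by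
  rw [← inner_sub_right, inner_eq_integral_mul]
  refine integral_congr_ae ?_
  filter_upwards [Lp.coeFn_sub Y X] with t ht
  rw [ht, Pi.sub_apply]

lemma lawOf_compMeasurePreserving (Y : L2) {S : ℝ → ℝ}
    (hS : MeasurePreserving S unitMeasure unitMeasure) :
    lawOf (Lp.compMeasurePreserving S hS Y) = lawOf Y := by
  rw [lawOf, Measure.map_congr (Lp.coeFn_compMeasurePreserving Y hS),
    ← Measure.map_map (Lp.stronglyMeasurable Y).measurable hS.measurable, hS.map_eq]
  rfl

lemma exists_lawOf_eq_sub_lt_inner {G G' : L2} (hG : lawOf G = lawOf G') (Y : L2) {ε : ℝ}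
    (hε : 0 < ε) : ∃ Z : L2, lawOf Z = lawOf Y ∧ ⟪G', Y⟫ - ε < ⟪G, Z⟫ := by
  obtain ⟨S, hS, hclose⟩ := exists_measurePreserving_abs_sub_lt
    (Lp.stronglyMeasurable G).measurable (Lp.stronglyMeasurable G').measurable hG
    (ε := ε / (‖Y‖ + 1)) (by positivity)
  let comp := Lp.compMeasurePreservingₗᵢ ℝ S hS (E := ℝ) (p := 2)
  refine ⟨comp Y, lawOf_compMeasurePreserving Y hS, ?_⟩
  have hdist : ‖G - comp G'‖ ≤ ε / (‖Y‖ + 1) := by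
    refine (Lp.norm_le_of_ae_bound (C := ε / (‖Y‖ + 1)) (by positivity) ?_).trans
      (by simp [measureUnivNNReal])
    filter_upwards [hclose, Lp.coeFn_sub G (comp G'),
      Lp.coeFn_compMeasurePreserving G' hS] with u hu hsub hcomp
    rw [hsub, Pi.sub_apply]
    change ‖G u - Lp.compMeasurePreserving S hS G' u‖ ≤ _
    rw [hcomp, Real.norm_eq_abs]
    exact hu.le
  have hsmall : ‖G - comp G'‖ * ‖comp Y‖ < ε :=
    calc ‖G - comp G'‖ * ‖comp Y‖ ≤ ε / (‖Y‖ + 1) * ‖Y‖ := by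
          rw [LinearIsometry.norm_map]
          exact mul_le_mul_of_nonneg_right hdist (norm_nonneg Y)
      _ < ε := by
          rw [div_mul_eq_mul_div, div_lt_iff₀ (by positivity)]
          nlinarith
  calc ⟪G', Y⟫ - ε < ⟪G', Y⟫ - ‖G - comp G'‖ * ‖comp Y‖ := by linarith
    _ ≤ ⟪G', Y⟫ + ⟪G - comp G', comp Y⟫ := by
          linarith [neg_le_of_abs_le (abs_real_inner_le_norm (G - comp G') (comp Y))]
    _ = ⟪G, comp Y⟫ := by rw [inner_sub_left, LinearIsometry.inner_map_map]; ring

end LawInvariance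

lemma EReal.add_coe_le_of_forall_lt {x y : EReal} {a : ℝ} (h : ∀ b < a, x + b ≤ y) :
    x + a ≤ y := by
  refine EReal.add_le_of_forall_lt fun x' hx' b hb => ?_
  obtain ⟨c, hbc, hca⟩ := EReal.lt_iff_exists_real_btwn.1 hb
  exact (add_le_add hx'.le hbc.le).trans (h c (EReal.coe_lt_coe_iff.1 hca))

theorem subdiff_symmetric_general (f : L2 → EReal)
    (hsymm : SymmL2 f)
    (X G X' G' : L2) (hlaw : lawOf2 X G = lawOf2 X' G')
    (hsub : InSubdiff f X G) :
    InSubdiff f X' G' := by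
  have hX : f X' = f X := hsymm X' X (by rw [← map_fst_lawOf2 X' G', ← hlaw, map_fst_lawOf2])
  have hG : lawOf G = lawOf G' := by rw [← map_snd_lawOf2 X G, hlaw, map_snd_lawOf2]
  intro Y
  rw [hX, integral_mul_sub_eq_inner, ← inner_eq_of_lawOf2_eq hlaw]
  refine EReal.add_coe_le_of_forall_lt fun c hc => ?_
  obtain ⟨Z, hZ, hGZ⟩ := exists_lawOf_eq_sub_lt_inner hG Y (sub_pos.2 hc)
  calc f X + c ≤ f X + ↑(∫ t, G t * (Z t - X t) ∂unitMeasure) := by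
        rw [integral_mul_sub_eq_inner]
        exact add_le_add le_rfl (EReal.coe_le_coe_iff.2 (by linarith))
    _ ≤ f Z := hsub Z
    _ = f Y := hsymm Z Y hZ

/-- Proposition: the subdifferential of a symmetric convex function on
`L2(0,1)` depends only on the joint law. -/
theorem subdiff_symmetric (f : L2 → EReal)
    (hsymm : SymmL2 f) (hlsc : LowerSemicontinuous f)
    (hbot : ∀ X, f X ≠ ⊥) (hproper : ∃ X, f X ≠ ⊤) (hconv : ConvexE f)
    (X G X' G' : L2) (hlaw : lawOf2 X G = lawOf2 X' G')
    (hsub : InSubdiff f X G) :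
    InSubdiff f X' G' :=
  subdiff_symmetric_general f hsymm X G X' G' hlaw hsub

end
end

section
/- Let f_p: ℝ^p → ℝ∪{+∞} be lsc, proper, symmetric, and convex; let f: L2(0,1) → ℝ∪{+∞} be a symmetric, lsc, proper, convex L2 embedding of f_p; and let 𝔄: P₂(ℝ) → PR₁ satisfy prox[f](Y) = 𝔄(law of Y)∘Y for every Y ∈ L2(0,1). Then for every y ∈ ℝ^p and every i ∈ {1,…,p}: (prox[f_p](y))_i = 𝔄(μ_y)(y_i), where μ_y = (1/p)Σ_{j=1}^p δ_{y_j} is the empirical distribution of the coordinates of y. -/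
open MeasureTheory ProbabilityTheory Filter
open scoped ENNReal NNReal

noncomputable section

noncomputable section

/-- A Borel partition of `(0,1)` into `p` parts, each of Lebesgue measure `1/p`. -/
def IsUnifPartition (p : ℕ) (I : Fin p → Set ℝ) : Prop :=
  (∀ j, MeasurableSet (I j)) ∧ Pairwise (Function.onFun Disjoint I) ∧
    (⋃ j, I j) = Set.Ioo (0:ℝ) 1 ∧ ∀ j, volume (I j) = 1 / (p : ℝ≥0∞)

/-- `X ∈ L2(0,1)` represents the embedding `ι(x) = Σ_j x_j · 1_{I_j}` of `x ∈ ℝ^p`. -/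
def RepresentsEmbed {p : ℕ} (I : Fin p → Set ℝ) (x : Fin p → ℝ) (X : L2) : Prop :=
  (fun t => X t) =ᵐ[unitMeasure]
    fun t => ∑ j, Set.indicator (I j) (fun _ => x j) t

/-- `f : L2(0,1) → ℝ ∪ {+∞}` is an `L2` embedding of `fp : ℝ^p → ℝ ∪ {+∞}`,
i.e. `fp x = p · f(ι x)` for every `x` and every embedding `ι` of the above form. -/
def IsL2Embedding {p : ℕ} (fp : (Fin p → ℝ) → EReal) (f : L2 → EReal) : Prop :=
  ∀ (I : Fin p → Set ℝ), IsUnifPartition p I →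
    ∀ (x : Fin p → ℝ) (X : L2), RepresentsEmbed I x X →
      fp x = (p : EReal) * f X

end

/-!
Embed `y ∈ ℝ^p` as the step function `Y = Σ_j y_j 1_{I_j}` on the uniform partition of `(0,1)`.
Since `f` is convex, lower semicontinuous and proper, `X ↦ ½‖Y - X‖² + f X` is strongly convex,
lower semicontinuous and bounded below on the Hilbert space `L2(0,1)`, so the prox `P` of `f` at
`Y` exists. By hypothesis `P = 𝔄(μ_y) ∘ Y`, again a step function, namely the embedding of
`q_j = 𝔄(μ_y)(y_j)`. Under the embedding the proximal objective of `f_p` is exactly `p` times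
that of `f`, so `q` beats every competitor in `ℝ^p`, and uniqueness of `prox[f_p](y)` gives
`prox[f_p](y) = q`.
-/

section Convex

variable {E : Type*}

theorem ConvexE.apply_le_coe [AddCommMonoid E] [Module ℝ E] {f : E → EReal} (hf : ConvexE f)
    {x y : E} {r s a b : ℝ} (hx : f x ≤ r) (hy : f y ≤ s) (ha : 0 ≤ a) (hb : 0 ≤ b)
    (hab : a + b = 1) : f (a • x + b • y) ≤ ((a * r + b * s : ℝ) : EReal) :=
  calc f (a • x + b • y) ≤ (a : EReal) * f x + (b : EReal) * f y := hf x y a b ha hb hab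
    _ ≤ (a : EReal) * r + (b : EReal) * s := by gcongr
    _ = ((a * r + b * s : ℝ) : EReal) := by norm_cast

variable [NormedAddCommGroup E] [NormedSpace ℝ E]

/-- Lower semicontinuity at `X0` bounds `f` below near `X0`, and convexity propagates the bound
along rays from `X0`, at a linear cost in the distance. -/
theorem ConvexE.exists_coe_sub_mul_norm_le {f : E → EReal} (hf : ConvexE f)
    (hlsc : LowerSemicontinuous f) {X0 : E} {c : ℝ} (hX0 : f X0 = c) :
    ∃ C ≥ 0, ∀ X, ((c - 1 - C * ‖X - X0‖ : ℝ) : EReal) ≤ f X := by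
  have hc : ((c - 1 : ℝ) : EReal) < f X0 := by
    rw [hX0]
    exact EReal.coe_lt_coe_iff.2 (sub_one_lt c)
  obtain ⟨δ, hδ, hball⟩ := Metric.eventually_nhds_iff.1 (hlsc X0 _ hc)
  refine ⟨2 / δ, by positivity, fun X => ?_⟩
  by_contra! hlt
  obtain ⟨r, hXr, hr⟩ := EReal.exists_between_coe_real hlt
  rw [EReal.coe_lt_coe_iff] at hr
  set d := ‖X - X0‖
  by_cases hd : d < δ
  · have := (hball (by rwa [dist_eq_norm])).trans hXr
    rw [EReal.coe_lt_coe_iff] at this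
    linarith [show 0 ≤ 2 / δ * d by positivity]
  set t := δ / (2 * d)
  have hdpos : 0 < d := hδ.trans_le (not_lt.1 hd)
  have ht : 0 < t := by positivity
  have htd : t * d = δ / 2 := by simp only [t]; field_simp
  have ht1 : t ≤ 1 := by simp only [t]; rw [div_le_one (by positivity)]; linarith
  have hW : dist ((1 - t) • X0 + t • X) X0 < δ := by
    have : (1 - t) • X0 + t • X - X0 = t • (X - X0) := by module
    rw [dist_eq_norm, this, norm_smul, Real.norm_of_nonneg ht.le, htd]
    linarith
  have hW' := (hball hW).trans_le
    (hf.apply_le_coe hX0.le hXr.le (by linarith) ht.le (by ring))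
  rw [EReal.coe_lt_coe_iff] at hW'
  have : t * (2 / δ * d) = 1 := by simp only [t]; field_simp
  nlinarith [mul_lt_mul_of_pos_left hr ht]

end Convex

section Minimizer

variable {E : Type*} [NormedAddCommGroup E] [NormedSpace ℝ E] [CompleteSpace E]

/-- A minimizing sequence of such a `g` is Cauchy; its limit is a minimizer by lower
semicontinuity, and the strong convexity inequality at two minimizers forces them to coincide. -/
theorem exists_unique_minimizer_of_midpoint_le {g : E → EReal} (hg : LowerSemicontinuous g)
    {B : ℝ} (hB : ∀ X, (B : EReal) ≤ g X) (hfin : ∃ X, g X ≠ ⊤)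
    (hmid : ∀ (X Z : E) (r s : ℝ), g X ≤ r → g Z ≤ s →
      g ((1 / 2 : ℝ) • X + (1 / 2 : ℝ) • Z) ≤ (((r + s) / 2 - ‖X - Z‖ ^ 2 / 8 : ℝ) : EReal)) :
    ∃ P, (∀ X, g P ≤ g X) ∧ ∀ X, g X ≤ g P → X = P := by
  obtain ⟨X0, hX0⟩ := hfin
  obtain ⟨m, hm⟩ : ∃ m : ℝ, ⨅ X, g X = m :=
    ⟨_, (EReal.coe_toReal (ne_top_of_le_ne_top hX0 (iInf_le g X0))
      (ne_bot_of_le_ne_bot (EReal.coe_ne_bot B) (le_iInf hB))).symm⟩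
  have hle : ∀ X, (m : EReal) ≤ g X := fun X => hm ▸ iInf_le g X
  have hclose : ∀ (X Z : E) (ε δ : ℝ), g X ≤ ((m + ε : ℝ) : EReal) →
      g Z ≤ ((m + δ : ℝ) : EReal) → ‖X - Z‖ ^ 2 ≤ 4 * (ε + δ) := by
    intro X Z ε δ hX hZ
    have := (hle _).trans (hmid X Z _ _ hX hZ)
    rw [EReal.coe_le_coe_iff] at this
    linarith
  have hseq : ∀ n : ℕ, ∃ X, g X ≤ ((m + 1 / ((n : ℝ) + 1) : ℝ) : EReal) := fun n =>
    have : ⨅ X, g X < ((m + 1 / ((n : ℝ) + 1) : ℝ) : EReal) := by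
      rw [hm, EReal.coe_lt_coe_iff]
      exact lt_add_of_pos_right m (by positivity)
    (iInf_lt_iff.1 this).imp fun _ => le_of_lt
  choose u hu using hseq
  have hcauchy : CauchySeq u := by
    refine cauchySeq_of_le_tendsto_0' (fun n => √(8 * (1 / ((n : ℝ) + 1))))
      (fun n k hnk => ?_) ?_
    · rw [dist_eq_norm, Real.le_sqrt (norm_nonneg _) (by positivity)]
      have : 1 / ((k : ℝ) + 1) ≤ 1 / ((n : ℝ) + 1) :=
        one_div_le_one_div_of_le (by positivity) (by exact_mod_cast Nat.add_le_add_right hnk 1)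
      linarith [hclose _ _ _ _ (hu n) (hu k)]
    · have := (tendsto_one_div_add_atTop_nhds_zero_nat.const_mul (8 : ℝ)).sqrt
      rwa [mul_zero, Real.sqrt_zero] at this
  obtain ⟨P, hP⟩ := cauchySeq_tendsto_of_complete hcauchy
  have hPm : g P ≤ m := by
    by_contra! h
    obtain ⟨c, hmc, hcP⟩ := EReal.exists_between_coe_real h
    rw [EReal.coe_lt_coe_iff] at hmc
    have hnear : ∀ᶠ n in atTop, (c : EReal) < g (u n) := hP.eventually (hg P c hcP)
    have hsmall : ∀ᶠ n : ℕ in atTop, m + 1 / ((n : ℝ) + 1) < c := by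
      have := (tendsto_one_div_add_atTop_nhds_zero_nat (𝕜 := ℝ)).const_add m
      exact this.eventually (gt_mem_nhds (by simpa using hmc))
    obtain ⟨n, hn, hn'⟩ := (hnear.and hsmall).exists
    have := hn.trans_le (hu n)
    rw [EReal.coe_lt_coe_iff] at this
    linarith
  refine ⟨P, fun X => hPm.trans (hle X), fun X hX => ?_⟩
  have := hclose X P 0 0 (by simpa using hX.trans hPm) (by simpa using hPm)
  exact sub_eq_zero.1 (norm_eq_zero.1 (pow_eq_zero_iff two_ne_zero |>.1
    (le_antisymm (by simpa using this) (by positivity))))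

end Minimizer

section Prox

variable {E : Type*} [NormedAddCommGroup E]

def moreauObj (f : E → EReal) (Y X : E) : EReal := ((1 / 2 * ‖Y - X‖ ^ 2 : ℝ) : EReal) + f X

theorem moreauObj_le_coe_iff {f : E → EReal} {Y X : E} {r : ℝ} :
    moreauObj f Y X ≤ r ↔ f X ≤ ((r - 1 / 2 * ‖Y - X‖ ^ 2 : ℝ) : EReal) := by
  rw [moreauObj, EReal.coe_sub, EReal.le_sub_iff_add_le (.inl (EReal.coe_ne_bot _))
    (.inl (EReal.coe_ne_top _)), add_comm]

/-- The parallelogram law makes `X ↦ ½‖Y - X‖²` strongly convex at the midpoint. -/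
theorem ConvexE.moreauObj_midpoint_le [InnerProductSpace ℝ E] {f : E → EReal} (hf : ConvexE f)
    (Y : E) {X Z : E} {r s : ℝ} (hX : moreauObj f Y X ≤ r) (hZ : moreauObj f Y Z ≤ s) :
    moreauObj f Y ((1 / 2 : ℝ) • X + (1 / 2 : ℝ) • Z) ≤
      (((r + s) / 2 - ‖X - Z‖ ^ 2 / 8 : ℝ) : EReal) := by
  rw [moreauObj_le_coe_iff] at hX hZ ⊢
  refine (hf.apply_le_coe hX hZ (by norm_num) (by norm_num) (by norm_num)).trans_eq ?_
  have hpar := parallelogram_law_with_norm ℝ (Y - X) (Y - Z)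
  have hmid :
      Y - ((1 / 2 : ℝ) • X + (1 / 2 : ℝ) • Z) = (1 / 2 : ℝ) • ((Y - X) + (Y - Z)) := by
    module
  rw [show (Y - X) - (Y - Z) = -(X - Z) by abel, norm_neg] at hpar
  rw [EReal.coe_eq_coe_iff, hmid, norm_smul, mul_pow, Real.norm_of_nonneg (by norm_num)]
  linarith

theorem ConvexE.exists_unique_minimizer_moreauObj [InnerProductSpace ℝ E] [CompleteSpace E]
    {f : E → EReal} (hf : ConvexE f) (hlsc : LowerSemicontinuous f) {X0 : E} {c : ℝ}
    (hX0 : f X0 = c) (Y : E) :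
    ∃ P, (∀ X, moreauObj f Y P ≤ moreauObj f Y X) ∧
      ∀ X, moreauObj f Y X ≤ moreauObj f Y P → X = P := by
  obtain ⟨C, hC, hminor⟩ := hf.exists_coe_sub_mul_norm_le hlsc hX0
  have hbdd (X : E) : ((c - 1 - C * ‖Y - X0‖ - C ^ 2 / 2 : ℝ) : EReal) ≤ moreauObj f Y X :=
    calc ((c - 1 - C * ‖Y - X0‖ - C ^ 2 / 2 : ℝ) : EReal)
        ≤ ((1 / 2 * ‖Y - X‖ ^ 2 : ℝ) : EReal) + ((c - 1 - C * ‖X - X0‖ : ℝ) : EReal) := by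
          rw [← EReal.coe_add, EReal.coe_le_coe_iff]
          nlinarith [norm_sub_le_norm_sub_add_norm_sub X Y X0, norm_sub_rev X Y,
            sq_nonneg (‖Y - X‖ - C)]
      _ ≤ moreauObj f Y X := add_le_add_right (hminor X) _
  have hlscObj : LowerSemicontinuous (moreauObj f Y) :=
    (continuous_coe_real_ereal.comp (by fun_prop)).lowerSemicontinuous.add' hlsc
      fun _ => EReal.continuousAt_add (.inl (EReal.coe_ne_top _)) (.inl (EReal.coe_ne_bot _))
  exact exists_unique_minimizer_of_midpoint_le hlscObj hbdd
    ⟨X0, by rw [moreauObj, hX0, ← EReal.coe_add]; exact EReal.coe_ne_top _⟩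
    fun _ _ _ _ => hf.moreauObj_midpoint_le Y

end Prox

section Embedding

instance : IsFiniteMeasure unitMeasure := isFiniteMeasure_restrict.2 measure_Ioo_lt_top.ne

def unifPartition (p : ℕ) (j : Fin p) : Set ℝ :=
  Set.Ioo 0 1 ∩ Set.Ico (((j : ℕ) : ℝ) / p) ((((j : ℕ) : ℝ) + 1) / p)

theorem mem_unifPartition_iff {p : ℕ} (hp : 0 < p) {j : Fin p} {t : ℝ} :
    t ∈ unifPartition p j ↔ t ∈ Set.Ioo 0 1 ∧ ⌊t * p⌋₊ = j := by
  have hp' : (0 : ℝ) < p := Nat.cast_pos.2 hp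
  simp only [unifPartition, Set.mem_inter_iff, Set.mem_Ico, div_le_iff₀ hp', lt_div_iff₀ hp']
  exact and_congr_right fun ht => (Nat.floor_eq_iff (by nlinarith [ht.1])).symm

theorem isUnifPartition_unifPartition {p : ℕ} (hp : 0 < p) :
    IsUnifPartition p (unifPartition p) := by
  have hp' : (0 : ℝ) < p := Nat.cast_pos.2 hp
  refine ⟨fun j => measurableSet_Ioo.inter measurableSet_Ico, fun j k hjk => ?_, ?_, fun j => ?_⟩
  · refine Set.disjoint_left.2 fun t htj htk => hjk (Fin.ext ?_)
    exact ((mem_unifPartition_iff hp).1 htj).2.symm.trans ((mem_unifPartition_iff hp).1 htk).2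
  · ext t
    simp only [Set.mem_iUnion, mem_unifPartition_iff hp]
    refine ⟨fun ⟨_, ht, _⟩ => ht, fun ht => ⟨⟨⌊t * p⌋₊, ?_⟩, ht, rfl⟩⟩
    exact (Nat.floor_lt (by nlinarith [ht.1])).2 (by nlinarith [ht.2])
  · have hj : ((j : ℕ) : ℝ) + 1 ≤ p := by exact_mod_cast j.2
    calc volume (unifPartition p j)
        = volume (Set.Icc 0 1 ∩ Set.Ico (((j : ℕ) : ℝ) / p) ((((j : ℕ) : ℝ) + 1) / p)) :=
          measure_congr (Ioo_ae_eq_Icc.inter EventuallyEq.rfl)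
      _ = volume (Set.Ico (((j : ℕ) : ℝ) / p) ((((j : ℕ) : ℝ) + 1) / p)) := by
          rw [Set.inter_eq_right.2 (Set.Ico_subset_Icc_self.trans
            (Set.Icc_subset_Icc (by positivity) ((div_le_one hp').2 hj)))]
      _ = 1 / (p : ℝ≥0∞) := by
          rw [Real.volume_Ico, ← sub_div, add_sub_cancel_left, ENNReal.ofReal_div_of_pos hp',
            ENNReal.ofReal_one, ENNReal.ofReal_natCast]

variable {p : ℕ} {I : Fin p → Set ℝ}

def stepFun (I : Fin p → Set ℝ) (x : Fin p → ℝ) (t : ℝ) : ℝ :=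
  ∑ j, (I j).indicator (fun _ => x j) t

theorem stepFun_of_mem (hI : Pairwise (Function.onFun Disjoint I)) (x : Fin p → ℝ) {t : ℝ}
    {j : Fin p} (ht : t ∈ I j) : stepFun I x t = x j := by
  rw [stepFun, Finset.sum_eq_single_of_mem j (Finset.mem_univ j), Set.indicator_of_mem ht]
  exact fun k _ hkj => Set.indicator_of_notMem (Set.disjoint_right.1 (hI hkj) ht) _

theorem measurable_stepFun (hI : ∀ j, MeasurableSet (I j)) (x : Fin p → ℝ) :
    Measurable (stepFun I x) :=
  Finset.measurable_sum _ fun j _ => measurable_const.indicator (hI j)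

theorem IsUnifPartition.ae_exists_mem (hI : IsUnifPartition p I) :
    ∀ᵐ t ∂unitMeasure, ∃ j, t ∈ I j := by
  filter_upwards [ae_restrict_mem measurableSet_Ioo] with t ht
  exact Set.mem_iUnion.1 (hI.2.2.1 ▸ ht)

theorem ae_eq_stepFun_iff (hI : IsUnifPartition p I) {x : Fin p → ℝ} {g : ℝ → ℝ} :
    g =ᵐ[unitMeasure] stepFun I x ↔ ∀ᵐ t ∂unitMeasure, ∀ j, t ∈ I j → g t = x j := by
  constructor
  · intro h
    filter_upwards [h] with t ht j hj
    rw [ht, stepFun_of_mem hI.2.1 x hj]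
  · intro h
    filter_upwards [h, hI.ae_exists_mem] with t ht ⟨j, hj⟩
    rw [ht j hj, stepFun_of_mem hI.2.1 x hj]

theorem exists_representsEmbed (hI : ∀ j, MeasurableSet (I j)) (x : Fin p → ℝ) :
    ∃ X : L2, RepresentsEmbed I x X :=
  have hmem : MemLp (stepFun I x) 2 unitMeasure :=
    memLp_finsetSum _ fun j _ => (memLp_const (x j)).indicator (hI j)
  ⟨hmem.toLp _, hmem.coeFn_toLp⟩

theorem integral_stepFun (hI : IsUnifPartition p I) (x : Fin p → ℝ) :
    ∫ t, stepFun I x t ∂unitMeasure = (∑ j, x j) / p := by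
  have hvol (j : Fin p) : unitMeasure.real (I j) = 1 / p := by
    rw [measureReal_def, unitMeasure, Measure.restrict_apply (hI.1 j),
      Set.inter_eq_self_of_subset_left (hI.2.2.1 ▸ Set.subset_iUnion I j), hI.2.2.2 j]
    simp
  simp only [stepFun]
  rw [integral_finsetSum _ fun j _ => (integrable_const (x j)).indicator (hI.1 j),
    Finset.sum_div]
  refine Finset.sum_congr rfl fun j _ => ?_
  rw [integral_indicator_const _ (hI.1 j), hvol, smul_eq_mul]
  ring

theorem map_stepFun (hI : IsUnifPartition p I) (x : Fin p → ℝ) :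
    unitMeasure.map (stepFun I x) = empDist x := by
  have hpiece (j : Fin p) :
      (volume.restrict (I j)).map (stepFun I x) = (p : ℝ≥0∞)⁻¹ • Measure.dirac (x j) := by
    have hconst : stepFun I x =ᵐ[volume.restrict (I j)] fun _ => x j :=
      (ae_restrict_mem (hI.1 j)).mono fun t ht => stepFun_of_mem hI.2.1 x ht
    rw [Measure.map_congr hconst, Measure.map_const, Measure.restrict_apply_univ, hI.2.2.2 j,
      one_div]
  rw [unitMeasure, ← hI.2.2.1, Measure.restrict_iUnion hI.2.1 hI.1,
    Measure.map_sum (measurable_stepFun hI.1 x).aemeasurable, Measure.sum_fintype, empDist,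
    Finset.smul_sum]
  exact Finset.sum_congr rfl fun j _ => hpiece j

theorem RepresentsEmbed.lawOf_eq (hI : IsUnifPartition p I) {x : Fin p → ℝ} {X : L2}
    (hX : RepresentsEmbed I x X) : lawOf X = empDist x := by
  rw [lawOf, Measure.map_congr hX]
  exact map_stepFun hI x

theorem integral_sub_sq_of_representsEmbed (hI : IsUnifPartition p I) {y x : Fin p → ℝ}
    {Y X : L2} (hY : RepresentsEmbed I y Y) (hX : RepresentsEmbed I x X) :
    ∫ t, (Y t - X t) ^ 2 ∂unitMeasure = (∑ j, (y j - x j) ^ 2) / p := by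
  have hsq : (fun t => (Y t - X t) ^ 2) =ᵐ[unitMeasure] stepFun I fun j => (y j - x j) ^ 2 := by
    refine (ae_eq_stepFun_iff hI).2 ?_
    filter_upwards [(ae_eq_stepFun_iff hI).1 hY, (ae_eq_stepFun_iff hI).1 hX]
      with t hYt hXt j hj
    rw [hYt j hj, hXt j hj]
  rw [integral_congr_ae hsq, integral_stepFun hI]

end Embedding

theorem integral_sub_sq_eq_norm_sq {α : Type*} [MeasurableSpace α] {μ : Measure α}
    (Y X : Lp ℝ 2 μ) : ∫ t, (Y t - X t) ^ 2 ∂μ = ‖Y - X‖ ^ 2 := by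
  rw [← real_inner_self_eq_norm_sq, MeasureTheory.L2.inner_def]
  refine integral_congr_ae ?_
  filter_upwards [Lp.coeFn_sub Y X] with t ht
  rw [ht]
  simp [sq]

theorem exists_isProxL2 {f : L2 → EReal} (hf : ConvexE f) (hlsc : LowerSemicontinuous f)
    {X0 : L2} {c : ℝ} (hX0 : f X0 = c) (Y : L2) : ∃ P, IsProxL2 f Y P := by
  have hobj : objL2 f Y = moreauObj f Y := funext fun X => by
    rw [objL2, moreauObj, integral_sub_sq_eq_norm_sq]
  simpa only [IsProxL2, hobj] using hf.exists_unique_minimizer_moreauObj hlsc hX0 Y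

theorem IsL2Embedding.objPi_eq {p : ℕ} (hp : 0 < p) {I : Fin p → Set ℝ}
    (hI : IsUnifPartition p I) {fp : (Fin p → ℝ) → EReal} {f : L2 → EReal}
    (hembed : IsL2Embedding fp f) {y x : Fin p → ℝ} {Y X : L2} (hY : RepresentsEmbed I y Y)
    (hX : RepresentsEmbed I x X) : objPi fp y x = (p : EReal) * objL2 f Y X := by
  have hp' : (p : ℝ) ≠ 0 := Nat.cast_ne_zero.2 hp.ne'
  rw [objPi, objL2, integral_sub_sq_of_representsEmbed hI hY hX, hembed I hI x X hX,
    EReal.left_distrib_of_nonneg_of_ne_top (by positivity) (EReal.natCast_ne_top p),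
    ← EReal.coe_coe_eq_natCast, ← EReal.coe_mul]
  congr 2
  field_simp

theorem prox_embedding_coordinatewise_general (p : ℕ)
    (fp : (Fin p → ℝ) → EReal)
    (f : L2 → EReal)
    (hflsc : LowerSemicontinuous f) (hfbot : ∀ X, f X ≠ ⊥)
    (hfproper : ∃ X, f X ≠ ⊤) (hfconv : ConvexE f)
    (hembed : IsL2Embedding fp f)
    (A : Measure ℝ → ℝ → ℝ)
    (hA : ∀ Y P : L2, IsProxL2 f Y P →
      (fun t => P t) =ᵐ[unitMeasure] fun t => A (lawOf Y) (Y t)) :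
    ∀ (y Px : Fin p → ℝ), IsProxPi fp y Px →
      ∀ i : Fin p, Px i = A (empDist y) (y i) := by
  intro y Px hPx i
  have hp : 0 < p := i.pos
  have hI := isUnifPartition_unifPartition hp
  obtain ⟨X0, hX0⟩ := hfproper
  obtain ⟨Y, hY⟩ := exists_representsEmbed hI.1 y
  obtain ⟨P, hP⟩ := exists_isProxL2 hfconv hflsc (EReal.coe_toReal hX0 (hfbot X0)).symm Y
  set q : Fin p → ℝ := fun j => A (empDist y) (y j)
  have hPq : RepresentsEmbed (unifPartition p) q P := by
    refine (ae_eq_stepFun_iff hI).2 ?_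
    filter_upwards [hA Y P hP, (ae_eq_stepFun_iff hI).1 hY] with t hPt hYt j hj
    rw [hPt, hY.lawOf_eq hI, hYt j hj]
  obtain ⟨X, hX⟩ := exists_representsEmbed hI.1 Px
  have hle : objPi fp y q ≤ objPi fp y Px := by
    rw [hembed.objPi_eq hp hI hY hPq, hembed.objPi_eq hp hI hY hX]
    exact mul_le_mul_of_nonneg_left (hP.1 X) (by positivity)
  exact congrFun (hPx.2 q hle).symm i

/-- Proposition: the finite-dimensional proximal operator is computed
coordinatewise by the effective scalar representation of an `L2` embedding. -/
theorem prox_embedding_coordinatewise (p : ℕ) (hp : 1 ≤ p)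
    (fp : (Fin p → ℝ) → EReal)
    (hlsc : LowerSemicontinuous fp) (hbot : ∀ x, fp x ≠ ⊥) (hproper : ∃ x, fp x ≠ ⊤)
    (hsymm : SymmPi fp) (hconv : ConvexE fp)
    (f : L2 → EReal)
    (hfsymm : SymmL2 f) (hflsc : LowerSemicontinuous f) (hfbot : ∀ X, f X ≠ ⊥)
    (hfproper : ∃ X, f X ≠ ⊤) (hfconv : ConvexE f)
    (hembed : IsL2Embedding fp f)
    (A : Measure ℝ → ℝ → ℝ)
    (hA : ∀ Y P : L2, IsProxL2 f Y P →
      (fun t => P t) =ᵐ[unitMeasure] fun t => A (lawOf Y) (Y t)) :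
    ∀ (y Px : Fin p → ℝ), IsProxPi fp y Px →
      ∀ i : Fin p, Px i = A (empDist y) (y i) :=
  prox_embedding_coordinatewise_general p fp f hflsc hfbot hfproper hfconv hembed A hA
end
end
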